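/- Let I be a (full-supported) matroidal ideal of degree d ≥ 2 in R = k[x_1,...,x_n]. Then I is an unmixed ideal if and only if for every i with 1 ≤ i ≤ n, the colon ideal (I : x_i) is unmixed and height(I) = height(I : x_i). -/

import Mathlib

open MvPolynomial

namespace PaperDefs

variable {k : Type*} [Field k] {n : ℕ}

/-- The total degree of an exponent vector. -/
def edeg (a : Fin n →₀ ℕ) : ℕ := ∑ i, a i

/-- `I` is a monomial ideal: it is generated by a set of monomials. -/
def IsMonomialIdeal (I : Ideal (MvPolynomial (Fin n) k)) : Prop :=
  ∃ S : Set (Fin n →₀ ℕ),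
    I = Ideal.span ((fun a => (MvPolynomial.monomial a (1 : k))) '' S)

/-- The (exponent vectors of the) unique minimal monomial generating set `G(I)`:
monomials of `I` that are minimal with respect to divisibility. -/
def minGens (I : Ideal (MvPolynomial (Fin n) k)) : Set (Fin n →₀ ℕ) :=
  {a | (MvPolynomial.monomial a (1 : k)) ∈ I ∧
    ∀ b : Fin n →₀ ℕ, b < a → (MvPolynomial.monomial b (1 : k)) ∉ I}

/-- A squarefree exponent vector. -/
def SqFree (a : Fin n →₀ ℕ) : Prop := ∀ i, a i ≤ 1

/-- `I` is a polymatroidal ideal of degree `d`. -/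
def IsPolymatroidal (I : Ideal (MvPolynomial (Fin n) k)) (d : ℕ) : Prop :=
  IsMonomialIdeal I ∧ I ≠ ⊥ ∧
  (∀ a ∈ minGens I, edeg a = d) ∧
  ∀ a ∈ minGens I, ∀ b ∈ minGens I, ∀ i : Fin n, b i < a i →
    ∃ j : Fin n, a j < b j ∧
      (MvPolynomial.monomial (a - Finsupp.single i 1 + Finsupp.single j 1) (1 : k)) ∈ I

/-- `I` is a matroidal ideal of degree `d`: a squarefree polymatroidal ideal. -/
def IsMatroidal (I : Ideal (MvPolynomial (Fin n) k)) (d : ℕ) : Prop :=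
  IsPolymatroidal I d ∧ ∀ a ∈ minGens I, SqFree a

/-- `I` is full-supported: every variable divides some minimal generator. -/
def FullSupported (I : Ideal (MvPolynomial (Fin n) k)) : Prop :=
  ∀ i : Fin n, ∃ a ∈ minGens I, a i ≠ 0

/-- The maximal graded ideal `(x_1, ..., x_n)`. -/
noncomputable def varIdeal (k : Type*) [Field k] (n : ℕ) : Ideal (MvPolynomial (Fin n) k) :=
  Ideal.span (Set.range MvPolynomial.X)

/-- The colon ideal `(I : x_i)`. -/
noncomputable def colonVar (I : Ideal (MvPolynomial (Fin n) k)) (i : Fin n) :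
    Ideal (MvPolynomial (Fin n) k) :=
  I.colon ((Ideal.span {MvPolynomial.X i} : Ideal (MvPolynomial (Fin n) k)) : Set (MvPolynomial (Fin n) k))

/-- The height of an ideal: the infimum of `Order.height` over the primes containing it. -/
noncomputable def ht {R : Type*} [CommRing R] (I : Ideal R) : ℕ∞ :=
  ⨅ (p : PrimeSpectrum R) (_ : I ≤ p.asIdeal), Order.height p

/-- `I` is unmixed: all associated primes of `R/I` have the same height. -/
def IsUnmixed (I : Ideal (MvPolynomial (Fin n) k)) : Prop :=
  ∀ p ∈ associatedPrimes (MvPolynomial (Fin n) k) (MvPolynomial (Fin n) k ⧸ I),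
    ∀ q ∈ associatedPrimes (MvPolynomial (Fin n) k) (MvPolynomial (Fin n) k ⧸ I),
      ht p = ht q

/-- The arithmetical rank of `I`. -/
noncomputable def ara (I : Ideal (MvPolynomial (Fin n) k)) : ℕ :=
  sInf {t : ℕ | ∃ f : Fin t → MvPolynomial (Fin n) k,
    (Ideal.span (Set.range f)).radical = I.radical}

/-- The squarefree Veronese ideal of degree `d`. -/
noncomputable def sqfreeVeronese (k : Type*) [Field k] (n d : ℕ) : Ideal (MvPolynomial (Fin n) k) :=
  Ideal.span ((fun s : Finset (Fin n) => ∏ i ∈ s, MvPolynomial.X i) ''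
    {s : Finset (Fin n) | s.card = d})

/-- The depth of `R/I` : the supremum of lengths of `R/I`-regular sequences consisting of
elements of the maximal graded ideal. -/
noncomputable def quotDepth (I : Ideal (MvPolynomial (Fin n) k)) : ℕ :=
  sSup {r : ℕ | ∃ rs : List (MvPolynomial (Fin n) k), rs.length = r ∧
    (∀ x ∈ rs, x ∈ varIdeal k n) ∧
    RingTheory.Sequence.IsRegular (MvPolynomial (Fin n) k ⧸ I) rs}

/-- `R/I` is Cohen–Macaulay: the depth of `R/I` equals its Krull dimension. -/
def IsCohenMacaulayQuot (I : Ideal (MvPolynomial (Fin n) k)) : Prop :=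
  (quotDepth I : WithBot ℕ∞) = ringKrullDim (MvPolynomial (Fin n) k ⧸ I)

end PaperDefs

/-!
Over a Noetherian ring, `Ass(R/(J : x)) ⊆ Ass(R/J)` with equality on the primes avoiding `x`, and
an unmixed ideal has the height of each of its associated primes, because its minimal primes are
among them. Hence `J` is unmixed iff every `(J : x_i)` is unmixed of height `ht J`, provided no
`x_i` lies in `J` and every associated prime of `R/J` avoids some `x_i`. For a squarefree monomial
ideal `I` generated in degree `≥ 2` the first holds by degree, and the second because
`(I : 𝔪) = I`: if `x_i u ∈ I` for a monomial `u ∉ I` and every `i`, then a squarefree generator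
dividing `x_i u` but not `u` forces `deg_{x_i} u = 0`; so `u = 1`, yet no generator divides a
single variable.
-/

open PaperDefs

section CommRing

variable {A : Type*} [CommRing A]

-- `PaperDefs.IsUnmixed` over an arbitrary commutative ring; on `MvPolynomial (Fin n) k` the two
-- agree definitionally.
def Ideal.IsUnmixed (J : Ideal A) : Prop :=
  ∀ p ∈ associatedPrimes A (A ⧸ J), ∀ q ∈ associatedPrimes A (A ⧸ J), ht p = ht q

theorem ht_le_height {J : Ideal A} {q : PrimeSpectrum A} (hq : J ≤ q.asIdeal) :
    ht J ≤ Order.height q :=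
  biInf_le _ hq

theorem le_ht {J : Ideal A} {c : ℕ∞}
    (h : ∀ q : PrimeSpectrum A, J ≤ q.asIdeal → c ≤ Order.height q) : c ≤ ht J :=
  le_iInf₂ h

theorem ht_mono {J J' : Ideal A} (h : J ≤ J') : ht J ≤ ht J' :=
  le_ht fun _ hq => ht_le_height (h.trans hq)

theorem mem_colon_bot_mk_iff {J : Ideal A} {r f : A} :
    r ∈ (⊥ : Submodule A (A ⧸ J)).colon {Ideal.Quotient.mk J f} ↔ r * f ∈ J := by
  rw [Submodule.mem_colon_singleton, Submodule.mem_bot, Algebra.smul_def,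
    Ideal.Quotient.algebraMap_eq, ← map_mul, Ideal.Quotient.eq_zero_iff_mem]

theorem le_of_mem_associatedPrimes_quotient {J p : Ideal A}
    (hp : p ∈ associatedPrimes A (A ⧸ J)) : J ≤ p := by
  simpa [Submodule.annihilator_top, Ideal.annihilator_quotient] using hp.annihilator_le

variable [IsNoetherianRing A]

theorem associatedPrimes_quotient_colon_subset (J : Ideal A) (x : A) :
    associatedPrimes A (A ⧸ J.colon (Ideal.span {x})) ⊆ associatedPrimes A (A ⧸ J) := by
  intro p hp
  obtain ⟨hpp, y, rfl⟩ := isAssociatedPrime_iff.mp hp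
  obtain ⟨f, rfl⟩ := Ideal.Quotient.mk_surjective y
  refine isAssociatedPrime_iff.mpr ⟨hpp, Ideal.Quotient.mk J (f * x), ?_⟩
  ext r
  rw [mem_colon_bot_mk_iff, mem_colon_bot_mk_iff, Ideal.mem_colon_span_singleton, mul_assoc]

theorem mem_associatedPrimes_quotient_colon {J p : Ideal A}
    (hp : p ∈ associatedPrimes A (A ⧸ J)) {x : A} (hx : x ∉ p) :
    p ∈ associatedPrimes A (A ⧸ J.colon (Ideal.span {x})) := by
  obtain ⟨hpp, y, hpy⟩ := isAssociatedPrime_iff.mp hp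
  obtain ⟨f, rfl⟩ := Ideal.Quotient.mk_surjective y
  refine isAssociatedPrime_iff.mpr ⟨hpp, Ideal.Quotient.mk _ f, ?_⟩
  ext r
  rw [mem_colon_bot_mk_iff, Ideal.mem_colon_span_singleton, ← hpp.mul_mem_right_iff hx, hpy,
    mem_colon_bot_mk_iff, mul_right_comm]

-- Minimal primes are associated, and they compute the height.
theorem Ideal.IsUnmixed.ht_eq {J p : Ideal A} (hJ : J.IsUnmixed)
    (hp : p ∈ associatedPrimes A (A ⧸ J)) : ht J = ht p := by
  refine le_antisymm (ht_mono (le_of_mem_associatedPrimes_quotient hp)) (le_ht fun q hq => ?_)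
  obtain ⟨q₀, hq₀, hq₀q⟩ := Ideal.exists_minimalPrimes_le hq
  have hq₀ass : q₀ ∈ associatedPrimes A (A ⧸ J) :=
    Module.associatedPrimes.minimalPrimes_annihilator_subset_associatedPrimes A (A ⧸ J)
      (by rwa [Ideal.annihilator_quotient])
  exact (hJ p hp q₀ hq₀ass).trans_le (ht_le_height hq₀q)

theorem Ideal.isUnmixed_iff_forall_isUnmixed_colon {J : Ideal A} {ι : Type*} (x : ι → A)
    (hxJ : ∀ i, x i ∉ J) (hass : ∀ p ∈ associatedPrimes A (A ⧸ J), ∃ i, x i ∉ p) :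
    J.IsUnmixed ↔ ∀ i, (J.colon (Ideal.span {x i})).IsUnmixed ∧
      ht J = ht (J.colon (Ideal.span {x i})) := by
  constructor
  · intro hJ i
    have hJi : (J.colon (Ideal.span {x i})).IsUnmixed := fun p hp q hq =>
      hJ p (associatedPrimes_quotient_colon_subset J _ hp) q
        (associatedPrimes_quotient_colon_subset J _ hq)
    have : Nontrivial (A ⧸ J.colon (Ideal.span {x i})) :=
      Ideal.Quotient.nontrivial_iff.mpr <|
        (Ideal.ne_top_iff_one _).mpr (by rw [Ideal.mem_colon_span_singleton, one_mul]; exact hxJ i)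
    obtain ⟨p, hp⟩ := associatedPrimes.nonempty A (A ⧸ J.colon (Ideal.span {x i}))
    exact ⟨hJi, (hJ.ht_eq (associatedPrimes_quotient_colon_subset J _ hp)).trans
      (hJi.ht_eq hp).symm⟩
  · intro h
    suffices hp : ∀ p ∈ associatedPrimes A (A ⧸ J), ht p = ht J from
      fun p hp' q hq => (hp p hp').trans (hp q hq).symm
    intro p hp
    obtain ⟨i, hi⟩ := hass p hp
    rw [(h i).2, (h i).1.ht_eq (mem_associatedPrimes_quotient_colon hp hi)]

end CommRing

section Monomial

theorem monomial_mem_span_monomial_image_iff {σ R : Type*} [CommSemiring R] [Nontrivial R]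
    {s : Set (σ →₀ ℕ)} {a : σ →₀ ℕ} :
    monomial a (1 : R) ∈ Ideal.span ((fun b => monomial b (1 : R)) '' s) ↔ ∃ b ∈ s, b ≤ a := by
  classical
  simp [mem_ideal_span_monomial_image, support_monomial]

variable {k : Type*} [Field k] {n : ℕ}

theorem exists_mem_minGens_le {I : Ideal (MvPolynomial (Fin n) k)} {a : Fin n →₀ ℕ}
    (ha : monomial a (1 : k) ∈ I) : ∃ b ∈ minGens I, b ≤ a := by
  obtain ⟨b, ⟨hba, hb⟩, hmin⟩ := WellFounded.has_min wellFounded_lt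
    {b : Fin n →₀ ℕ | b ≤ a ∧ monomial b (1 : k) ∈ I} ⟨a, le_rfl, ha⟩
  exact ⟨b, ⟨hb, fun c hcb hc => hmin c ⟨hcb.le.trans hba, hc⟩ hcb⟩, hba⟩

theorem PaperDefs.IsMonomialIdeal.eq_span_minGens {I : Ideal (MvPolynomial (Fin n) k)}
    (hI : IsMonomialIdeal I) : I = Ideal.span ((fun a => monomial a (1 : k)) '' minGens I) := by
  obtain ⟨S, rfl⟩ := hI
  refine le_antisymm (Ideal.span_le.mpr ?_) (Ideal.span_le.mpr ?_)
  · rintro - ⟨s, hs, rfl⟩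
    exact monomial_mem_span_monomial_image_iff.mpr
      (exists_mem_minGens_le (Ideal.subset_span (Set.mem_image_of_mem _ hs)))
  · rintro - ⟨b, hb, rfl⟩
    exact hb.1

theorem PaperDefs.IsMonomialIdeal.minGens_nonempty {I : Ideal (MvPolynomial (Fin n) k)}
    (hI : IsMonomialIdeal I) (hbot : I ≠ ⊥) : (minGens I).Nonempty := by
  rw [Set.nonempty_iff_ne_empty]
  intro h
  apply hbot
  rw [hI.eq_span_minGens, h, Set.image_empty, Ideal.span_empty]

theorem edeg_mono {a b : Fin n →₀ ℕ} (h : a ≤ b) : edeg a ≤ edeg b :=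
  Finset.sum_le_sum fun i _ => h i

theorem edeg_single_one (i : Fin n) : edeg (Finsupp.single i 1) = 1 := by
  classical
  simp [edeg, Finsupp.single_apply]

theorem not_le_single_one_of_two_le_edeg {b : Fin n →₀ ℕ} (hb : 2 ≤ edeg b) (i : Fin n) :
    ¬b ≤ Finsupp.single i 1 := fun h => by
  have := edeg_mono h
  rw [edeg_single_one] at this
  omega

variable {G : Set (Fin n →₀ ℕ)}

theorem exists_le_of_forall_exists_le_single_add (hsq : ∀ b ∈ G, SqFree b)
    (hdeg : ∀ b ∈ G, 2 ≤ edeg b) (i₀ : Fin n) {a : Fin n →₀ ℕ}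
    (h : ∀ i, ∃ b ∈ G, b ≤ Finsupp.single i 1 + a) : ∃ b ∈ G, b ≤ a := by
  by_contra! hna
  have ha : a = 0 := by
    ext i
    obtain ⟨b, hb, hba⟩ := h i
    obtain ⟨j, hj⟩ : ∃ j, a j < b j := by simpa [Finsupp.le_def] using hna b hb
    have hbj := hba j
    have hsqj := hsq b hb j
    rw [Finsupp.add_apply, Finsupp.single_apply] at hbj
    split_ifs at hbj with hij
    · subst hij
      simp only [Finsupp.coe_zero, Pi.zero_apply]
      omega
    · omega
  obtain ⟨b, hb, hba⟩ := h i₀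
  rw [ha, add_zero] at hba
  exact not_le_single_one_of_two_le_edeg (hdeg b hb) i₀ hba

theorem mem_span_of_forall_X_mul_mem (hsq : ∀ b ∈ G, SqFree b) (hdeg : ∀ b ∈ G, 2 ≤ edeg b)
    (i₀ : Fin n) {f : MvPolynomial (Fin n) k}
    (h : ∀ i, X i * f ∈ Ideal.span ((fun b => monomial b (1 : k)) '' G)) :
    f ∈ Ideal.span ((fun b => monomial b (1 : k)) '' G) := by
  simp only [mem_ideal_span_monomial_image, support_X_mul] at h ⊢
  exact fun a ha => exists_le_of_forall_exists_le_single_add hsq hdeg i₀ fun i =>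
    h i _ (Finset.mem_map_of_mem _ ha)

theorem exists_X_notMem_of_mem_associatedPrimes (hsq : ∀ b ∈ G, SqFree b)
    (hdeg : ∀ b ∈ G, 2 ≤ edeg b) (i₀ : Fin n) {p : Ideal (MvPolynomial (Fin n) k)}
    (hp : p ∈ associatedPrimes _ (MvPolynomial (Fin n) k ⧸
      Ideal.span ((fun b => monomial b (1 : k)) '' G))) :
    ∃ i, X i ∉ p := by
  obtain ⟨hpp, y, rfl⟩ := isAssociatedPrime_iff.mp hp
  obtain ⟨f, rfl⟩ := Ideal.Quotient.mk_surjective y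
  by_contra! hX
  simp only [mem_colon_bot_mk_iff] at hX
  refine hpp.ne_top ((Ideal.eq_top_iff_one _).mpr (mem_colon_bot_mk_iff.mpr ?_))
  rw [one_mul]
  exact mem_span_of_forall_X_mul_mem hsq hdeg i₀ hX

theorem X_notMem_span_monomial_image (hdeg : ∀ b ∈ G, 2 ≤ edeg b) (i : Fin n) :
    X i ∉ Ideal.span ((fun b => monomial b (1 : k)) '' G) := fun h => by
  obtain ⟨b, hb, hbi⟩ := monomial_mem_span_monomial_image_iff.mp h
  exact not_le_single_one_of_two_le_edeg (hdeg b hb) i hbi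

end Monomial

open PaperDefs in
theorem statement7_general {k : Type*} [Field k] {n d : ℕ} (hd : 2 ≤ d)
    (I : Ideal (MvPolynomial (Fin n) k))
    (hI : IsMatroidal I d) :
    IsUnmixed I ↔
      ∀ i : Fin n, IsUnmixed (colonVar I i) ∧ ht I = ht (colonVar I i) := by
  obtain ⟨⟨hmon, hbot, hdeg, -⟩, hsq⟩ := hI
  have hdeg₂ : ∀ b ∈ minGens I, 2 ≤ edeg b := fun b hb => hdeg b hb ▸ hd
  obtain ⟨b₀, hb₀⟩ := hmon.minGens_nonempty hbot
  obtain ⟨i₀, -⟩ : ∃ i, b₀ i ≠ 0 := by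
    by_contra! h
    simpa [edeg, h] using hdeg₂ b₀ hb₀
  refine Ideal.isUnmixed_iff_forall_isUnmixed_colon X (fun i => ?_) (fun p hp => ?_)
  · rw [hmon.eq_span_minGens]
    exact X_notMem_span_monomial_image hdeg₂ i
  · rw [hmon.eq_span_minGens] at hp
    exact exists_X_notMem_of_mem_associatedPrimes hsq hdeg₂ i₀ hp

open PaperDefs in
/-- Theorem 1.5. Let `I` be a full-supported matroidal ideal of degree
`d ≥ 2`. Then `I` is unmixed iff for every `i`, the colon ideal `(I : x_i)` is unmixed and
`height I = height (I : x_i)`. -/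
theorem statement7 {k : Type*} [Field k] {n d : ℕ} (hd : 2 ≤ d)
    (I : Ideal (MvPolynomial (Fin n) k))
    (hI : IsMatroidal I d) (hfull : FullSupported I) :
    IsUnmixed I ↔
      ∀ i : Fin n, IsUnmixed (colonVar I i) ∧ ht I = ht (colonVar I i) :=
  statement7_general hd I hI
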